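/- arXiv:math/0605709 — 3 statements merged into one kernel-verified Lean document; each statement's English description precedes it below -/
import Mathlib

section
/- For any two nonzero vectors u and w in a finite-dimensional complex inner product space of dimension at least 2, there exists a unitary operator Ω with determinant 1 such that Ω u = (‖u‖/‖w‖) • w. -/
/-!
Extend `x` and `y` to orthonormal bases `b` and `c` sharing the index of `x` and `y`. The
isometry sending `b` to `c` maps `x` to `y`, but its determinant is the change-of-basis
determinant `δ = b.det c`, which merely has modulus one. Since the dimension is at least two,
some other vector of `c` can be multiplied by `δ⁻¹` without leaving the orthonormal bases or
moving `y`, and this brings the determinant to one.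
-/

open Module

section

variable {ι 𝕜 E : Type*} [RCLike 𝕜] [NormedAddCommGroup E] [InnerProductSpace 𝕜 E]

theorem Orthonormal.smul_of_norm_eq_one {v : ι → E} (hv : Orthonormal 𝕜 v) {a : ι → 𝕜}
    (ha : ∀ i, ‖a i‖ = 1) : Orthonormal 𝕜 (a • v) := by
  classical
  rw [orthonormal_iff_ite] at hv ⊢
  intro i j
  rw [Pi.smul_apply', Pi.smul_apply', inner_smul_left, inner_smul_right, hv]
  split_ifs with hij
  · subst hij
    rw [mul_one, RCLike.conj_mul, ha]
    simp
  · simp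

namespace OrthonormalBasis

variable [Fintype ι]

noncomputable def smulOfNormEqOne (b : OrthonormalBasis ι 𝕜 E) (a : ι → 𝕜)
    (ha : ∀ i, ‖a i‖ = 1) : OrthonormalBasis ι 𝕜 E :=
  (b.toBasis.isUnitSMul fun i =>
    (norm_ne_zero_iff.mp (by rw [ha i]; exact one_ne_zero)).isUnit).toOrthonormalBasis <| by
      convert b.orthonormal.smul_of_norm_eq_one ha
      ext i
      simp [Basis.isUnitSMul_apply]

@[simp]
theorem coe_smulOfNormEqOne (b : OrthonormalBasis ι 𝕜 E) (a : ι → 𝕜) (ha : ∀ i, ‖a i‖ = 1) :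
    ⇑(b.smulOfNormEqOne a ha) = a • ⇑b := by
  ext i
  simp [smulOfNormEqOne, Basis.isUnitSMul_apply]

theorem exists_apply_eq_of_norm_eq_one [FiniteDimensional 𝕜 E]
    (hcard : finrank 𝕜 E = Fintype.card ι) (i : ι) {x : E} (hx : ‖x‖ = 1) :
    ∃ b : OrthonormalBasis ι 𝕜 E, b i = x := by
  have hon : Orthonormal 𝕜 (({i} : Set ι).domRestrict fun _ => x) :=
    orthonormal_subsingleton_iff.mpr fun _ => hx
  obtain ⟨b, hb⟩ := hon.exists_orthonormalBasis_extension_of_card_eq hcard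
  exact ⟨b, hb i rfl⟩

theorem det_equiv_refl [DecidableEq ι] (b c : OrthonormalBasis ι 𝕜 E) :
    LinearMap.det (b.equiv c (Equiv.refl ι)).toLinearEquiv.toLinearMap = b.toBasis.det c := by
  rw [← mul_one (LinearMap.det _), ← b.toBasis.det_self, ← Basis.det_comp]
  congr 1
  ext i
  simp

end OrthonormalBasis

theorem LinearIsometryEquiv.exists_det_eq_one_apply_eq_of_norm_eq_one [FiniteDimensional 𝕜 E]
    (hdim : 1 < finrank 𝕜 E) {x y : E} (hx : ‖x‖ = 1) (hy : ‖y‖ = 1) :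
    ∃ Ω : E ≃ₗᵢ[𝕜] E, LinearMap.det Ω.toLinearEquiv.toLinearMap = 1 ∧ Ω x = y := by
  let i₀ : Fin (finrank 𝕜 E) := ⟨0, by omega⟩
  let i₁ : Fin (finrank 𝕜 E) := ⟨1, hdim⟩
  have hi : i₀ ≠ i₁ := by simp [i₀, i₁, Fin.ext_iff]
  have hcard : finrank 𝕜 E = Fintype.card (Fin (finrank 𝕜 E)) := (Fintype.card_fin _).symm
  obtain ⟨b, hb⟩ := OrthonormalBasis.exists_apply_eq_of_norm_eq_one hcard i₀ hx
  obtain ⟨c, hc⟩ := OrthonormalBasis.exists_apply_eq_of_norm_eq_one hcard i₀ hy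
  set δ := b.toBasis.det c
  have hδ : ‖δ‖ = 1 := b.det_to_matrix_orthonormalBasis c
  let a : Fin (finrank 𝕜 E) → 𝕜 := Function.update 1 i₁ δ⁻¹
  have ha : ∀ i, ‖a i‖ = 1 := by
    intro i
    by_cases h : i = i₁ <;> simp [a, h, hδ]
  refine ⟨b.equiv (c.smulOfNormEqOne a ha) (Equiv.refl _), ?_, ?_⟩
  · have hδ₀ : δ ≠ 0 := norm_ne_zero_iff.mp (by rw [hδ]; exact one_ne_zero)
    rw [OrthonormalBasis.det_equiv_refl, OrthonormalBasis.coe_smulOfNormEqOne]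
    calc b.toBasis.det (fun i => a i • c i) = (∏ i, a i) • δ := AlternatingMap.map_smul_univ _ _ _
      _ = 1 := by simp [a, Finset.prod_update_of_mem, hδ₀]
  · rw [← hb, OrthonormalBasis.equiv_apply_basis, OrthonormalBasis.coe_smulOfNormEqOne]
    simp [a, hi, hc]

theorem LinearIsometryEquiv.exists_det_eq_one_apply_eq_of_norm_eq [FiniteDimensional 𝕜 E]
    (hdim : 1 < finrank 𝕜 E) {x y : E} (hxy : ‖x‖ = ‖y‖) :
    ∃ Ω : E ≃ₗᵢ[𝕜] E, LinearMap.det Ω.toLinearEquiv.toLinearMap = 1 ∧ Ω x = y := by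
  rcases eq_or_ne x 0 with rfl | hx
  · exact ⟨.refl 𝕜 E, by simp, by simpa [eq_comm] using hxy⟩
  have hy : y ≠ 0 := norm_ne_zero_iff.mp (hxy ▸ norm_ne_zero_iff.mpr hx)
  obtain ⟨Ω, hdet, hΩ⟩ := exists_det_eq_one_apply_eq_of_norm_eq_one hdim
    (norm_smul_inv_norm (𝕜 := 𝕜) hx) (norm_smul_inv_norm (𝕜 := 𝕜) hy)
  refine ⟨Ω, hdet, ?_⟩
  have hx' : (‖x‖ : 𝕜) ≠ 0 := by exact_mod_cast norm_ne_zero_iff.mpr hx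
  calc Ω x = (‖x‖ : 𝕜) • Ω ((‖x‖ : 𝕜)⁻¹ • x) := by rw [map_smul, smul_inv_smul₀ hx']
    _ = y := by rw [hΩ, hxy, smul_inv_smul₀ (hxy ▸ hx')]

end

theorem su_rotation_of_vacuum_perturbation_general
    {V : Type*} [NormedAddCommGroup V] [InnerProductSpace ℂ V] [FiniteDimensional ℂ V]
    (hdim : 2 ≤ Module.finrank ℂ V) (u w : V) (hw : w ≠ 0) :
    ∃ Ω : V ≃ₗᵢ[ℂ] V, LinearMap.det Ω.toLinearEquiv.toLinearMap = 1 ∧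
      Ω u = ((‖u‖ / ‖w‖ : ℝ) : ℂ) • w := by
  refine LinearIsometryEquiv.exists_det_eq_one_apply_eq_of_norm_eq hdim ?_
  rw [norm_smul, Complex.norm_real, Real.norm_of_nonneg (by positivity),
    div_mul_cancel₀ _ (norm_ne_zero_iff.mpr hw)]

/-- **Eq. (3.11).** For any two nonzero vectors `u` and `w` in a finite-dimensional complex
inner product space of dimension at least 2, there is a unitary operator with determinant 1
sending `u` to `(‖u‖/‖w‖) • w`. -/
theorem su_rotation_of_vacuum_perturbation
    {V : Type*} [NormedAddCommGroup V] [InnerProductSpace ℂ V] [FiniteDimensional ℂ V]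
    (hdim : 2 ≤ Module.finrank ℂ V) (u w : V) (hu : u ≠ 0) (hw : w ≠ 0) :
    ∃ Ω : V ≃ₗᵢ[ℂ] V, LinearMap.det Ω.toLinearEquiv.toLinearMap = 1 ∧
      Ω u = ((‖u‖ / ‖w‖ : ℝ) : ℂ) • w :=
  su_rotation_of_vacuum_perturbation_general hdim u w hw
end

section
/- Suppose a linear endomorphism A of V is self-adjoint (⟪A x, y⟫ = ⟪x, A y⟫ for all x, y) and A = a⁺ • P + a⁻ • Q + b • W₁ + c • W₂. Then a⁺ and a⁻ are real (equal to their complex conjugates), c = (‖w‖²/‖v‖²) · conj b, and if moreover the trace of A is zero then a⁻ = −a⁺. -/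
/-- The rank-one operator `x ↦ (⟪a, x⟫ / ‖a‖²) • b` (inner product conjugate-linear
in the first argument).  With `a = b = v` it is the paper's projector `P[vac]` (eq. (4.3)),
with `a = b = w` the projector `Q[vac]` (eq. (4.8)); `projOp v w` is `W[φ▸φ̂]` (eq. (4.13))
and `projOp w v` is `W[φ̂▸φ]` (eq. (4.14)). -/
noncomputable def projOp {V : Type*} [NormedAddCommGroup V] [InnerProductSpace ℂ V]
    (a b : V) : V →ₗ[ℂ] V where
  toFun x := ((inner ℂ a x : ℂ) / ((‖a‖ : ℂ) ^ 2)) • b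
  map_add' x y := by
    simp [inner_add_right, add_div, add_smul]
  map_smul' c x := by
    simp [inner_smul_right, mul_div_assoc, mul_smul]

/-- **Eqs. (4.27), (4.29).** If `A = a⁺ • P + a⁻ • Q + b • W₁ + c • W₂` is self-adjoint,
then `a⁺` and `a⁻` are real, `c = (‖w‖²/‖v‖²) · conj b`, and if moreover `A` is
traceless then `a⁻ = −a⁺`. -/
theorem selfAdjoint_expansion_coefficients
    {V : Type*} [NormedAddCommGroup V] [InnerProductSpace ℂ V] [FiniteDimensional ℂ V]
    (hdim : Module.finrank ℂ V = 2)
    (v w : V) (hv : v ≠ 0) (hw : w ≠ 0) (hvw : (inner ℂ v w : ℂ) = 0)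
    (A : V →ₗ[ℂ] V) (hA : ∀ x y : V, (inner ℂ (A x) y : ℂ) = inner ℂ x (A y))
    (aP aQ b c : ℂ)
    (hexp : A = aP • projOp v v + aQ • projOp w w + b • projOp v w + c • projOp w v) :
    starRingEnd ℂ aP = aP ∧ starRingEnd ℂ aQ = aQ ∧
    c = ((‖w‖ ^ 2 / ‖v‖ ^ 2 : ℝ) : ℂ) * starRingEnd ℂ b ∧
    (LinearMap.trace ℂ V A = 0 → aQ = -aP) := by
  have hwv : (inner ℂ w v : ℂ) = 0 := by rw [← inner_conj_symm, hvw, map_zero]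
  have hvv : (inner ℂ v v : ℂ) = (‖v‖ : ℂ) ^ 2 := by
    rw [inner_self_eq_norm_sq_to_K]; norm_cast
  have hww : (inner ℂ w w : ℂ) = (‖w‖ : ℂ) ^ 2 := by
    rw [inner_self_eq_norm_sq_to_K]; norm_cast
  have hv2 : ((‖v‖ : ℂ) ^ 2) ≠ 0 := by
    simpa using norm_ne_zero_iff.mpr hv
  have hw2 : ((‖w‖ : ℂ) ^ 2) ≠ 0 := by
    simpa using norm_ne_zero_iff.mpr hw
  have hAv : A v = aP • v + b • w := by
    subst hexp
    simp [projOp, hvv, hwv, div_self hv2]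
  have hAw : A w = aQ • w + c • v := by
    subst hexp
    simp [projOp, hww, hvw, div_self hw2, add_comm]
  have h1 : starRingEnd ℂ aP = aP := by
    have := hA v v
    rw [hAv] at this
    simp [inner_add_left, inner_add_right, inner_smul_left, inner_smul_right,
      hvv, hwv, hvw] at this
    exact mul_left_cancel₀ hv2 (this.trans (mul_comm _ _))
  have h2 : starRingEnd ℂ aQ = aQ := by
    have := hA w w
    rw [hAw] at this
    simp [inner_add_left, inner_add_right, inner_smul_left, inner_smul_right,
      hww, hwv, hvw] at this
    exact mul_left_cancel₀ hw2 (this.trans (mul_comm _ _))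
  have h3 : c = ((‖w‖ ^ 2 / ‖v‖ ^ 2 : ℝ) : ℂ) * starRingEnd ℂ b := by
    have := hA v w
    rw [hAv, hAw] at this
    simp [inner_add_left, inner_add_right, inner_smul_left, inner_smul_right,
      hvv, hww, hwv, hvw] at this
    push_cast
    rw [div_mul_eq_mul_div, eq_div_iff hv2]
    linear_combination -this
  refine ⟨h1, h2, h3, ?_⟩
  -- trace
  have hli : LinearIndependent ℂ ![v, w] := by
    rw [LinearIndependent.pair_iff]
    intro s t hst
    constructor
    · have := congrArg (fun x => (inner ℂ v x : ℂ)) hst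
      simp [inner_add_right, inner_smul_right, hvv, hvw] at this
      rcases this with h | h
      · exact h
      · exact absurd h hv
    · have := congrArg (fun x => (inner ℂ w x : ℂ)) hst
      simp [inner_add_right, inner_smul_right, hww, hwv] at this
      rcases this with h | h
      · exact h
      · exact absurd h hw
  have hcard : Fintype.card (Fin 2) = Module.finrank ℂ V := by simp [hdim]
  let B := basisOfLinearIndependentOfCardEqFinrank hli hcard
  have hB0 : B 0 = v := by simp [B, coe_basisOfLinearIndependentOfCardEqFinrank]
  have hB1 : B 1 = w := by simp [B, coe_basisOfLinearIndependentOfCardEqFinrank]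
  have htr : LinearMap.trace ℂ V A = aP + aQ := by
    rw [LinearMap.trace_eq_matrix_trace ℂ B A, Matrix.trace]
    simp only [Matrix.diag, LinearMap.toMatrix_apply, Fin.sum_univ_two]
    rw [hB0, hB1, hAv, hAw, ← hB0, ← hB1]
    simp [Finsupp.single_apply]
  intro htr0
  rw [htr] at htr0
  linear_combination htr0
end

section
/- Let g₁, g₂, s be real numbers with g₂ ≠ 0, and let A be a self-adjoint linear endomorphism of V (⟪A x, y⟫ = ⟪x, A y⟫) with trace zero. If g₂ • (A v) + (3·g₁·s) • v = 0, then ⟪w, A v⟫ = 0, ⟪v, A w⟫ = 0, and A = (3·g₁·s/g₂) • (Q − P). -/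
/-- **Eq. (4.30).** Solving the residual-symmetry equation (4.2): if `A` is a traceless
self-adjoint endomorphism with `g₂ • A v + (3g₁s) • v = 0` and `g₂ ≠ 0`, then the
W-boson components of `A` vanish (`⟪w, A v⟫ = 0`, `⟪v, A w⟫ = 0`) and
`A = (3g₁s/g₂) • (Q − P)`. -/
theorem residual_symmetry_solution
    {V : Type*} [NormedAddCommGroup V] [InnerProductSpace ℂ V] [FiniteDimensional ℂ V]
    (hdim : Module.finrank ℂ V = 2)
    (v w : V) (hv : v ≠ 0) (hw : w ≠ 0) (hvw : (inner ℂ v w : ℂ) = 0)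
    (g₁ g₂ s : ℝ) (hg₂ : g₂ ≠ 0)
    (A : V →ₗ[ℂ] V) (hA : ∀ x y : V, (inner ℂ (A x) y : ℂ) = inner ℂ x (A y))
    (htr : LinearMap.trace ℂ V A = 0)
    (heq : (g₂ : ℂ) • A v + ((3 * g₁ * s : ℝ) : ℂ) • v = 0) :
    (inner ℂ w (A v) : ℂ) = 0 ∧ (inner ℂ v (A w) : ℂ) = 0 ∧
    A = ((3 * g₁ * s / g₂ : ℝ) : ℂ) • (projOp w w - projOp v v) := by
  have hwv : (inner ℂ w v : ℂ) = 0 := by rw [← inner_conj_symm, hvw, map_zero]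
  set c : ℂ := ((3 * g₁ * s / g₂ : ℝ) : ℂ) with hc
  have hg₂' : (g₂ : ℂ) ≠ 0 := by exact_mod_cast hg₂
  have hAv : A v = (-c) • v := by
    have h : (g₂ : ℂ) • A v = -(((3 * g₁ * s : ℝ) : ℂ) • v) := by
      rw [eq_neg_iff_add_eq_zero]; exact heq
    have h2 := congrArg (fun x => (g₂ : ℂ)⁻¹ • x) h
    simp only [smul_smul, inv_mul_cancel₀ hg₂', one_smul, smul_neg] at h2
    rw [h2, ← neg_smul]
    congr 1
    rw [hc]
    push_cast
    field_simp
  have h1 : (inner ℂ w (A v) : ℂ) = 0 := by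
    rw [hAv, inner_smul_right, hwv, mul_zero]
  have h2 : (inner ℂ v (A w) : ℂ) = 0 := by
    rw [← hA, hAv, inner_smul_left, hvw, mul_zero]
  refine ⟨h1, h2, ?_⟩
  have li : LinearIndependent ℂ ![v, w] := by
    rw [LinearIndependent.pair_iff]
    intro a t hst
    constructor
    · have := congrArg (fun x => (inner ℂ v x : ℂ)) hst
      simp [inner_add_right, inner_smul_right, hvw, inner_self_eq_zero] at this
      rcases this with h | h
      · exact h
      · exact absurd h hv
    · have := congrArg (fun x => (inner ℂ w x : ℂ)) hst
      simp [inner_add_right, inner_smul_right, hwv, inner_self_eq_zero] at this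
      rcases this with h | h
      · exact h
      · exact absurd h hw
  let b : Module.Basis (Fin 2) ℂ V := basisOfLinearIndependentOfCardEqFinrank li (by simp [hdim])
  have hb0 : b 0 = v := by simp [b, coe_basisOfLinearIndependentOfCardEqFinrank]
  have hb1 : b 1 = w := by simp [b, coe_basisOfLinearIndependentOfCardEqFinrank]
  have hrv : b.repr v = Finsupp.single 0 1 := by rw [← hb0]; exact b.repr_self 0
  have hdecomp : A w = b.repr (A w) 0 • v + b.repr (A w) 1 • w := by
    have h := b.sum_repr (A w)
    rw [Fin.sum_univ_two, hb0, hb1] at h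
    exact h.symm
  have hr0 : b.repr (A w) 0 = 0 := by
    have h3 := h2
    rw [hdecomp, inner_add_right, inner_smul_right, inner_smul_right, hvw, mul_zero,
      add_zero] at h3
    rcases mul_eq_zero.mp h3 with h | h
    · exact h
    · exact absurd (inner_self_eq_zero.mp h) hv
  have htr' : -c + b.repr (A w) 1 = 0 := by
    have h := htr
    rw [LinearMap.trace_eq_matrix_trace ℂ b A, Matrix.trace, Fin.sum_univ_two] at h
    simpa [Matrix.diag, LinearMap.toMatrix_apply, hb0, hb1, hAv, map_smul, hrv] using h
  have hAw : A w = c • w := by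
    rw [hdecomp, hr0, zero_smul, zero_add]
    congr 1
    linear_combination htr'
  have hnv : ((‖v‖ : ℂ))^2 ≠ 0 := by simp [norm_eq_zero, hv]
  have hnw : ((‖w‖ : ℂ))^2 ≠ 0 := by simp [norm_eq_zero, hw]
  have hiv : (inner ℂ v v : ℂ) = ((‖v‖ : ℂ))^2 := by
    rw [inner_self_eq_norm_sq_to_K]; norm_cast
  have hiw : (inner ℂ w w : ℂ) = ((‖w‖ : ℂ))^2 := by
    rw [inner_self_eq_norm_sq_to_K]; norm_cast
  apply b.ext
  intro i
  fin_cases i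
  · show A (b 0) = c • ((projOp w w - projOp v v) (b 0))
    rw [hb0, hAv]
    have hz : projOp w w v = 0 := by simp [projOp, hwv]
    have hp : projOp v v v = v := by
      simp only [projOp, LinearMap.coe_mk, AddHom.coe_mk]
      rw [hiv, div_self hnv, one_smul]
    rw [LinearMap.sub_apply, hz, hp, zero_sub, smul_neg, neg_smul]
  · show A (b 1) = c • ((projOp w w - projOp v v) (b 1))
    rw [hb1, hAw]
    have hq : projOp w w w = w := by
      simp only [projOp, LinearMap.coe_mk, AddHom.coe_mk]
      rw [hiw, div_self hnw, one_smul]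
    have hz : projOp v v w = 0 := by simp [projOp, hvw]
    rw [LinearMap.sub_apply, hq, hz, sub_zero]
end
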